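/- Let X be a partial groupoid and x ∈ X_m. Then x is degenerate if and only if x_{ij} is an identity edge for some i ≠ j in [m]. -/

import Mathlib

/-- A symmetric (simplicial) set: a functor `Υᵒᵖ → Set`, where `Υ` has objects
`[n] = {0,…,n}` (encoded as `Fin (n+1)`) and all functions as morphisms.
For `α : [m] → [n]` and `x ∈ X_n`, `act α x` is `x · α ∈ X_m`. -/
structure SymSet where
  obj : ℕ → Type
  act : ∀ {m n : ℕ}, (Fin (m + 1) → Fin (n + 1)) → obj n → obj m
  act_id : ∀ {n : ℕ} (x : obj n), act id x = x
  act_comp : ∀ {m n k : ℕ} (α : Fin (m + 1) → Fin (n + 1)) (β : Fin (n + 1) → Fin (k + 1))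
      (x : obj k), act α (act β x) = act (β ∘ α) x

namespace SymSet

/-- `x_{ij} ∈ X_1`, the action on `x ∈ X_n` of the map `[1] → [n]` with `0 ↦ i`, `1 ↦ j`. -/
def edge (X : SymSet) {n : ℕ} (i j : Fin (n + 1)) (x : X.obj n) : X.obj 1 :=
  X.act (fun t : Fin 2 => if t = 0 then i else j) x

/-- The domain of an edge, its image under `ι₀ : [0] → [1]`, `0 ↦ 0`. -/
def edgeDom (X : SymSet) (f : X.obj 1) : X.obj 0 :=
  X.act (fun _ : Fin 1 => (0 : Fin 2)) f

/-- The codomain of an edge, its image under `ι₁ : [0] → [1]`, `0 ↦ 1`. -/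
def edgeCod (X : SymSet) (f : X.obj 1) : X.obj 0 :=
  X.act (fun _ : Fin 1 => (1 : Fin 2)) f

/-- The identity edge `id_a` on an object `a ∈ X_0`, induced by the unique map `[1] → [0]`. -/
def identityEdge (X : SymSet) (a : X.obj 0) : X.obj 1 :=
  X.act (fun _ : Fin 2 => (0 : Fin 1)) a

/-- An edge is an identity if it is in the image of `X_0 → X_1`. -/
def IsIdentityEdge (X : SymSet) (f : X.obj 1) : Prop :=
  ∃ a : X.obj 0, f = X.identityEdge a

/-- The tuple of edges `x_{ij}` (for `i < j` an edge `{i,j}` of the spine `T`)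
associated to an `n`-simplex `x`. -/
def spineTuple (X : SymSet) {n : ℕ} (T : SimpleGraph (Fin (n + 1))) (x : X.obj n) :
    ∀ i j : Fin (n + 1), i < j → T.Adj i j → X.obj 1 :=
  fun i j _ _ => X.edge i j x

/-- Membership in `lim_T X`: the components have matching endpoints. -/
def IsSpineLim (X : SymSet) {n : ℕ} (T : SimpleGraph (Fin (n + 1)))
    (e : ∀ i j : Fin (n + 1), i < j → T.Adj i j → X.obj 1) : Prop :=
  ∃ v : Fin (n + 1) → X.obj 0, ∀ (i j : Fin (n + 1)) (hlt : i < j) (h : T.Adj i j),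
    X.edgeDom (e i j hlt h) = v i ∧ X.edgeCod (e i j hlt h) = v j

/-- The limit `lim_T X` of the diagram associated to a spine `T`. -/
def SpineLim (X : SymSet) {n : ℕ} (T : SimpleGraph (Fin (n + 1))) : Type :=
  { e : ∀ i j : Fin (n + 1), i < j → T.Adj i j → X.obj 1 // X.IsSpineLim T e }

lemma spineTuple_isSpineLim (X : SymSet) {n : ℕ} (T : SimpleGraph (Fin (n + 1)))
    (x : X.obj n) : X.IsSpineLim T (X.spineTuple T x) := by
  refine ⟨fun i => X.act (fun _ : Fin 1 => i) x, fun i j hlt h => ⟨?_, ?_⟩⟩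
  · show X.act _ (X.act _ x) = _
    rw [X.act_comp]
    show X.act ((fun t : Fin 2 => if t = 0 then i else j) ∘ fun _ : Fin 1 => 0) x
      = X.act (fun _ : Fin 1 => i) x
    congr 1
  · show X.act _ (X.act _ x) = _
    rw [X.act_comp]
    show X.act ((fun t : Fin 2 => if t = 0 then i else j) ∘ fun _ : Fin 1 => 1) x
      = X.act (fun _ : Fin 1 => j) x
    congr 1

/-- The map `𝓔_T : X_n → lim_T X`. -/
def spineMap (X : SymSet) {n : ℕ} (T : SimpleGraph (Fin (n + 1))) (x : X.obj n) :
    X.SpineLim T :=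
  ⟨X.spineTuple T x, X.spineTuple_isSpineLim T x⟩

/-- A symmetric set is *spiny* if `𝓔_T` is injective for every `n ≥ 1` and
every spine `T` of `[n]` (a tree with vertex set `[n]`). -/
def Spiny (X : SymSet) : Prop :=
  ∀ n : ℕ, 1 ≤ n → ∀ T : SimpleGraph (Fin (n + 1)), T.IsTree →
    Function.Injective (X.spineMap T)

/-- An element `x ∈ X_n` is degenerate if `x = y · σ` for some noninvertible
surjection `σ : [n] → [k]`. -/
def Degenerate (X : SymSet) {n : ℕ} (x : X.obj n) : Prop :=
  ∃ (k : ℕ) (σ : Fin (n + 1) → Fin (k + 1)) (y : X.obj k),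
    Function.Surjective σ ∧ ¬ Function.Bijective σ ∧ x = X.act σ y

/-- A symmetric subset (subfunctor) of `X`. -/
structure SymSubset (X : SymSet) where
  carrier : ∀ n : ℕ, Set (X.obj n)
  act_mem : ∀ {m n : ℕ} (α : Fin (m + 1) → Fin (n + 1)) {x : X.obj n},
    x ∈ carrier n → X.act α x ∈ carrier m

/-- `X` is `n`-skeletal: the smallest symmetric subset of `X` containing all
of its `n`-simplices is all of `X`. -/
def IsSkeletal (X : SymSet) (n : ℕ) : Prop :=
  ∀ Y : SymSubset X, (∀ x : X.obj n, x ∈ Y.carrier n) →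
    ∀ (m : ℕ) (x : X.obj m), x ∈ Y.carrier m

/-- `X` has dimension `n`: it is `n`-skeletal but not `k`-skeletal for `k < n`
(for `n ≥ 1` this is equivalent to not being `(n-1)`-skeletal). -/
def HasDim (X : SymSet) (n : ℕ) : Prop :=
  X.IsSkeletal n ∧ ∀ k : ℕ, k < n → ¬ X.IsSkeletal k

/-- Two objects are related if there is an edge between them (in either direction). -/
def EdgeRel (X : SymSet) (a b : X.obj 0) : Prop :=
  ∃ f : X.obj 1, (X.edgeDom f = a ∧ X.edgeCod f = b) ∨ (X.edgeDom f = b ∧ X.edgeCod f = a)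

/-- `X` is connected: it is nonempty and any two objects are joined by a
zig-zag of edges. -/
def Connected (X : SymSet) : Prop :=
  Nonempty (X.obj 0) ∧ ∀ a b : X.obj 0, Relation.ReflTransGen X.EdgeRel a b

/-- `n_a`: the number of nonidentity edges with domain `a`. -/
noncomputable def nEdges (X : SymSet) (a : X.obj 0) : ℕ :=
  Nat.card { f : X.obj 1 // X.edgeDom f = a ∧ ¬ X.IsIdentityEdge f }

/-- `p(X)`: the maximum of the `n_a` over all objects `a`. -/
noncomputable def pVal (X : SymSet) : ℕ := ⨆ a : X.obj 0, X.nEdges a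

/-- A map of symmetric sets (a natural transformation). -/
structure SymMap (X Y : SymSet) where
  app : ∀ n : ℕ, X.obj n → Y.obj n
  naturality : ∀ {m n : ℕ} (α : Fin (m + 1) → Fin (n + 1)) (x : X.obj n),
    app m (X.act α x) = Y.act α (app n x)

/-- A map of symmetric sets is an isomorphism iff it is levelwise bijective. -/
def SymMap.IsIso {X Y : SymSet} (F : SymMap X Y) : Prop :=
  ∀ n : ℕ, Function.Bijective (F.app n)

/-- `X` and `Y` are isomorphic symmetric sets. -/
def Isomorphic (X Y : SymSet) : Prop := ∃ F : SymMap X Y, F.IsIso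

/-- The Bousfield–Segal map `𝓑_m : X_m → X_1^m`, `x ↦ (x_{01}, x_{02}, …, x_{0m})`. -/
def bousfield (X : SymSet) {m : ℕ} (x : X.obj m) : Fin m → X.obj 1 :=
  fun i => X.edge 0 i.succ x

/-- `X` is spiny in degrees below `q`: `𝓔_T` is injective for every spine `T`
of `[n]` for each `1 ≤ n ≤ q`. -/
def SpinyBelow (X : SymSet) (q : ℕ) : Prop :=
  ∀ n : ℕ, 1 ≤ n → n ≤ q → ∀ T : SimpleGraph (Fin (n + 1)), T.IsTree →
    Function.Injective (X.spineMap T)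

/-- `X` is a groupoid: `𝓔_T : X_n → lim_T X` is a bijection for every `n ≥ 1`
and every spine `T` of `[n]`. -/
def IsGroupoid (X : SymSet) : Prop :=
  ∀ n : ℕ, 1 ≤ n → ∀ T : SimpleGraph (Fin (n + 1)), T.IsTree →
    Function.Bijective (X.spineMap T)

/-- `X` is reduced: `X_0` is a singleton. -/
def Reduced (X : SymSet) : Prop := Nonempty (X.obj 0) ∧ Subsingleton (X.obj 0)

/-- A partial group is a reduced spiny symmetric set. -/
def IsPartialGroup (X : SymSet) : Prop := X.Reduced ∧ X.Spiny

/-- The levelwise product of two symmetric sets. -/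
def prod (X Y : SymSet) : SymSet where
  obj n := X.obj n × Y.obj n
  act α p := (X.act α p.1, Y.act α p.2)
  act_id p := by cases p with | mk a b => simp only [X.act_id, Y.act_id]
  act_comp α β p := by cases p with | mk a b => simp only [X.act_comp, Y.act_comp]

end SymSet


/-!
If `x = y·σ` with `σ i = σ j` for some `i ≠ j`, then `x_{ij} = y_{σi,σi}` is an identity.
Conversely, if `x_{ij}` is an identity then `x_{ii} = x_{ij} = x_{ji}`, so `x` and `x·r`, where
`r` sends `j` to `i` and fixes everything else, have the same edges along the star spine centred
at `i`; spininess gives `x = x·r`, and any non-injective `r` factors through a non-invertible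
surjection onto its image.
-/

namespace SymSet

variable (X : SymSet)

lemma edge_act {m n : ℕ} (σ : Fin (m + 1) → Fin (n + 1)) (i j : Fin (m + 1)) (y : X.obj n) :
    X.edge i j (X.act σ y) = X.edge (σ i) (σ j) y := by
  rw [edge, edge, X.act_comp]
  congr 1
  funext t
  by_cases h : t = 0 <;> simp [h]

lemma edge_self {n : ℕ} (i : Fin (n + 1)) (x : X.obj n) :
    X.edge i i x = X.identityEdge (X.act (fun _ : Fin 1 => i) x) := by
  rw [edge, identityEdge, X.act_comp]
  simp only [ite_self]
  rfl

lemma isIdentityEdge_edge_self {n : ℕ} (i : Fin (n + 1)) (x : X.obj n) :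
    X.IsIdentityEdge (X.edge i i x) :=
  ⟨_, X.edge_self i x⟩

lemma edge_self_eq_act_edge {n : ℕ} (i j : Fin (n + 1)) (x : X.obj n) :
    X.edge i i x = X.act (fun _ : Fin 2 => 0) (X.edge i j x) := by
  rw [edge, edge, X.act_comp]
  simp only [ite_self]
  rfl

lemma edge_swap {n : ℕ} (i j : Fin (n + 1)) (x : X.obj n) :
    X.edge j i x = X.act (fun t : Fin 2 => if t = 0 then 1 else 0) (X.edge i j x) := by
  rw [edge, edge, X.act_comp]
  congr 1
  funext t
  fin_cases t <;> simp

variable {X}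

lemma IsIdentityEdge.act_eq {f : X.obj 1} (hf : X.IsIdentityEdge f) (α : Fin 2 → Fin 2) :
    X.act α f = f := by
  obtain ⟨a, rfl⟩ := hf
  rw [identityEdge, X.act_comp]
  rfl

lemma IsIdentityEdge.edge_self_eq {n : ℕ} {i j : Fin (n + 1)} {x : X.obj n}
    (h : X.IsIdentityEdge (X.edge i j x)) : X.edge i i x = X.edge i j x := by
  rw [edge_self_eq_act_edge, h.act_eq]

lemma IsIdentityEdge.edge_swap_eq {n : ℕ} {i j : Fin (n + 1)} {x : X.obj n}
    (h : X.IsIdentityEdge (X.edge i j x)) : X.edge j i x = X.edge i j x := by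
  rw [edge_swap, h.act_eq]

lemma Degenerate.exists_isIdentityEdge {n : ℕ} {x : X.obj n} (hx : X.Degenerate x) :
    ∃ i j : Fin (n + 1), i ≠ j ∧ X.IsIdentityEdge (X.edge i j x) := by
  obtain ⟨k, σ, y, hsurj, hnbij, rfl⟩ := hx
  obtain ⟨i, j, hσ, hij⟩ := Function.not_injective_iff.1 fun hinj => hnbij ⟨hinj, hsurj⟩
  refine ⟨i, j, hij, ?_⟩
  rw [edge_act, ← hσ]
  exact X.isIdentityEdge_edge_self _ _

lemma degenerate_act_of_not_injective {m n : ℕ} {α : Fin (m + 1) → Fin (n + 1)}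
    (hα : ¬ Function.Injective α) (y : X.obj n) : X.Degenerate (X.act α y) := by
  set s := Finset.univ.image α
  obtain ⟨k, hk⟩ : ∃ k, s.card = k + 1 :=
    Nat.exists_eq_succ_of_ne_zero (Finset.univ_nonempty.image α).card_pos.ne'
  let e : s ≃ Fin (k + 1) := s.equivFinOfCardEq hk
  let σ : Fin (m + 1) → Fin (k + 1) := fun t => e ⟨α t, Finset.mem_image_of_mem α (by simp)⟩
  let ι : Fin (k + 1) → Fin (n + 1) := fun u => (e.symm u : Fin (n + 1))
  have hfactor : ι ∘ σ = α := funext fun t => by simp [ι, σ]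
  refine ⟨k, σ, X.act ι y, fun u => ?_, fun hσ => hα fun a b hab => hσ.1 ?_, ?_⟩
  · obtain ⟨t, -, ht⟩ := Finset.mem_image.1 (e.symm u).2
    exact ⟨t, by simp [σ, ht]⟩
  · simp [σ, hab]
  · rw [X.act_comp, hfactor]

lemma Spiny.act_update_eq_self (hX : X.Spiny) {m : ℕ} (hm : 1 ≤ m) {x : X.obj m}
    {i j : Fin (m + 1)} (hij : i ≠ j) (h : X.IsIdentityEdge (X.edge i j x)) :
    X.act (Function.update id j i) x = x := by
  apply hX m hm _ (SimpleGraph.isTree_starGraph i)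
  refine Subtype.ext (funext fun u => funext fun v => funext fun _ => funext fun huv => ?_)
  change X.edge u v (X.act _ x) = X.edge u v x
  rw [edge_act]
  obtain ⟨-, rfl | rfl⟩ := SimpleGraph.starGraph_adj.1 huv
  · by_cases hv : v = j
    · subst hv
      simpa [hij] using h.edge_self_eq
    · simp [hij, hv]
  · by_cases hu : u = j
    · subst hu
      simpa [hij] using h.edge_self_eq.trans h.edge_swap_eq.symm
    · simp [hij, hu]

end SymSet

/-- in a partial groupoid, `x ∈ X_m` is degenerate iff `x_{ij}` is an
identity for some `i ≠ j`. -/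
theorem stmt2 (X : SymSet) (hX : X.Spiny) {m : ℕ} (x : X.obj m) :
    X.Degenerate x ↔ ∃ i j : Fin (m + 1), i ≠ j ∧ X.IsIdentityEdge (X.edge i j x) := by
  refine ⟨SymSet.Degenerate.exists_isIdentityEdge, fun ⟨i, j, hij, h⟩ => ?_⟩
  have hm : 1 ≤ m := by
    rcases m with _ | m
    · exact absurd (Fin.subsingleton_one.elim i j) hij
    · omega
  have hr : ¬ Function.Injective (Function.update id j i) := fun hinj =>
    hij (hinj (by simp [hij]))
  rw [← hX.act_update_eq_self hm hij h]
  exact SymSet.degenerate_act_of_not_injective hr x
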